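/- Let μ ≠ 0 and ε = ±1 be real constants, and on ℝ³ with coordinates (x₁,x₂,x₃) define the vector fields u₁ = e^{μx₃}∂₁ + (1/(2μ))((μ³x₂² + ε)e^{μx₃} − εe^{−μx₃})∂₂ − μx₂e^{μx₃}∂₃, u₂ = e^{−μx₃}∂₂, u₃ = ∂₃. Then their Lie brackets satisfy [u₁,u₂] = μu₃, [u₂,u₃] = μu₂, and [u₃,u₁] = μu₁ + εu₂. -/

import Mathlib

/-!
Each bracket is a direct Jacobian computation: beyond the product and chain rules one only needs
`e^{μx₃} e^{−μx₃} = 1` and `μ⁻¹ μ = 1` (to cancel the `1/(2μ)` in `u₁`). The `εu₂` term of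
`[u₃,u₁]` comes from the `−εe^{−μx₃}` part of the `∂₂`-coefficient of `u₁`, whose
`∂₃`-derivative has the opposite sign to that of the other part.
-/

/-- A point of `ℝ³`. -/
abbrev Pt := Fin 3 → ℝ

/-- The Lie bracket of two vector fields on `ℝ³`, viewed as smooth maps `ℝ³ → ℝ³`:
`[X,Y] = (DY)X − (DX)Y`. -/
noncomputable def vecBracket (X Y : Pt → Pt) : Pt → Pt :=
  fun p => fderiv ℝ Y p (X p) - fderiv ℝ X p (Y p)

/-- `u₁ = e^{μx₃}∂₁ + (1/(2μ))((μ³x₂² + ε)e^{μx₃} − εe^{−μx₃})∂₂ − μx₂e^{μx₃}∂₃`. -/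
noncomputable def u₁ (μ ε : ℝ) : Pt → Pt := fun p =>
  ![Real.exp (μ * p 2),
    (1/(2*μ)) * ((μ^3 * (p 1)^2 + ε) * Real.exp (μ * p 2) - ε * Real.exp (-(μ * p 2))),
    -(μ * p 1 * Real.exp (μ * p 2))]

/-- `u₂ = e^{−μx₃}∂₂`. -/
noncomputable def u₂ (μ : ℝ) : Pt → Pt := fun p =>
  ![0, Real.exp (-(μ * p 2)), 0]

/-- `u₃ = ∂₃`. -/
noncomputable def u₃ : Pt → Pt := fun _ => ![0, 0, 1]

section VecCons

variable {E : Type*} [NormedAddCommGroup E] [NormedSpace ℝ E] {n : ℕ}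
  {φ : E → ℝ} {φs : E → Fin n → ℝ} {x : E}

@[fun_prop]
theorem DifferentiableAt.vecCons (h : DifferentiableAt ℝ φ x) (hs : DifferentiableAt ℝ φs x) :
    DifferentiableAt ℝ (fun y => Matrix.vecCons (φ y) (φs y)) x :=
  h.finCons hs

theorem fderiv_vecCons_apply (h : DifferentiableAt ℝ φ x) (hs : DifferentiableAt ℝ φs x)
    (v : E) :
    fderiv ℝ (fun y => Matrix.vecCons (φ y) (φs y)) x v =
      Matrix.vecCons (fderiv ℝ φ x v) (fderiv ℝ φs x v) :=
  congrArg (· v) (h.hasFDerivAt.finCons (F' := fun _ => ℝ) hs.hasFDerivAt).fderiv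

theorem fderiv_vecEmpty_apply (v : E) : fderiv ℝ (fun _ : E => (![] : Fin 0 → ℝ)) x v = ![] :=
  Subsingleton.elim _ _

end VecCons

theorem fderiv_u₁_apply (μ ε : ℝ) (p v : Pt) :
    fderiv ℝ (u₁ μ ε) p v =
      ![μ * v 2 * Real.exp (μ * p 2),
        (1/(2*μ)) * (2 * μ^3 * p 1 * v 1 * Real.exp (μ * p 2)
          + (μ^3 * (p 1)^2 + ε) * μ * v 2 * Real.exp (μ * p 2)
          + ε * μ * v 2 * Real.exp (-(μ * p 2))),
        -(μ * v 1 * Real.exp (μ * p 2) + μ^2 * p 1 * v 2 * Real.exp (μ * p 2))] := by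
  unfold u₁
  simp (disch := fun_prop) only [fderiv_vecCons_apply, fderiv_vecEmpty_apply]
  simp (disch := fun_prop) only [fderiv_exp, fderiv_const_mul, fderiv_fun_mul, fderiv_fun_sub,
    fderiv_fun_add, fderiv_fun_pow, fderiv_fun_neg, fderiv_apply]
  ext i; fin_cases i <;> simp <;> ring

theorem fderiv_u₂_apply (μ : ℝ) (p v : Pt) :
    fderiv ℝ (u₂ μ) p v = ![0, -(μ * v 2 * Real.exp (-(μ * p 2))), 0] := by
  unfold u₂
  simp (disch := fun_prop) only [fderiv_vecCons_apply, fderiv_vecEmpty_apply]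
  simp (disch := fun_prop) only [fderiv_exp, fderiv_const_mul, fderiv_fun_neg, fderiv_apply]
  ext i; fin_cases i <;> simp
  ring

theorem fderiv_u₃ (p : Pt) : fderiv ℝ u₃ p = 0 :=
  fderiv_const_apply _

theorem vecBracket_u₁_u₂ {μ : ℝ} (hμ : μ ≠ 0) (ε : ℝ) (p : Pt) :
    vecBracket (u₁ μ ε) (u₂ μ) p = μ • u₃ p := by
  have hexp : Real.exp (μ * p 2) * Real.exp (-(μ * p 2)) = 1 := by
    rw [← Real.exp_add, add_neg_cancel, Real.exp_zero]
  simp only [vecBracket, fderiv_u₁_apply, fderiv_u₂_apply]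
  ext i; fin_cases i <;> simp [u₁, u₂, u₃]
  · linear_combination
      (-(μ ^ 2 * p 1 * Real.exp (μ * p 2) * Real.exp (-(μ * p 2)))) * inv_mul_cancel₀ hμ
  · linear_combination μ * hexp

theorem vecBracket_u₂_u₃ (μ : ℝ) (p : Pt) : vecBracket (u₂ μ) u₃ p = μ • u₂ μ p := by
  simp only [vecBracket, fderiv_u₃, fderiv_u₂_apply]
  ext i; fin_cases i <;> simp [u₂, u₃]

theorem vecBracket_u₃_u₁ {μ : ℝ} (hμ : μ ≠ 0) (ε : ℝ) (p : Pt) :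
    vecBracket u₃ (u₁ μ ε) p = μ • u₁ μ ε p + ε • u₂ μ p := by
  simp only [vecBracket, fderiv_u₃, fderiv_u₁_apply]
  ext i; fin_cases i <;> simp [u₁, u₂, u₃]
  · field_simp [hμ]
    ring
  · ring

theorem bracket_relations_general (μ ε : ℝ) (hμ : μ ≠ 0) :
    (∀ p : Pt, vecBracket (u₁ μ ε) (u₂ μ) p = μ • u₃ p) ∧
    (∀ p : Pt, vecBracket (u₂ μ) u₃ p = μ • u₂ μ p) ∧
    (∀ p : Pt, vecBracket u₃ (u₁ μ ε) p = μ • u₁ μ ε p + ε • u₂ μ p) := by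
  exact ⟨vecBracket_u₁_u₂ hμ ε, vecBracket_u₂_u₃ μ, vecBracket_u₃_u₁ hμ ε⟩

theorem bracket_relations (μ ε : ℝ) (hμ : μ ≠ 0) (hε : ε = 1 ∨ ε = -1) :
    (∀ p : Pt, vecBracket (u₁ μ ε) (u₂ μ) p = μ • u₃ p) ∧
    (∀ p : Pt, vecBracket (u₂ μ) u₃ p = μ • u₂ μ p) ∧
    (∀ p : Pt, vecBracket u₃ (u₁ μ ε) p = μ • u₁ μ ε p + ε • u₂ μ p) :=
  bracket_relations_general μ ε hμ
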